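/- arXiv:1210.1259 — 5 statements merged into one kernel-verified Lean document; each statement's English description precedes it below -/
import Mathlib

section
/- The following set S₀ of formulas has a model in which q is false and K(φ) is true for every formula φ: (1) all instances of □(φ→ψ)→(□(φ)→□(ψ)); (2) all instances of (K(φ→ψ)∧K(φ))→K(ψ); (3) all instances of the strong knowability thesis ¬□(¬K(φ)); (4) K(φ) for every tautology φ; (5) □(φ) for every tautology φ; (6) K(φ) for every instance of (1)-(7); (7) □(φ) for every instance of (1)-(7). -/
/-- Formulas with two unary modal operators K and □. -/
inductive Formula : Type
  | atom : ℕ → Formula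
  | imp : Formula → Formula → Formula
  | neg : Formula → Formula
  | K : Formula → Formula
  | box : Formula → Formula

/-- A model: truth values for atoms, and arbitrary truth-value assignments
to each formula `K φ` and each formula `□ φ`. -/
structure Model where
  atoms : ℕ → Prop
  kval : Formula → Prop
  boxval : Formula → Prop

def Model.eval (M : Model) : Formula → Prop
  | .atom n => M.atoms n
  | .imp φ ψ => M.eval φ → M.eval ψ
  | .neg φ => ¬ M.eval φ
  | .K φ => M.kval φ
  | .box φ => M.boxval φ

def Formula.or (φ ψ : Formula) : Formula := φ.neg.imp ψ
def Formula.and (φ ψ : Formula) : Formula := (φ.imp ψ.neg).neg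
def Formula.iff (φ ψ : Formula) : Formula := (φ.imp ψ).and (ψ.imp φ)

def Valid (φ : Formula) : Prop := ∀ M : Model, M.eval φ

def Entails (S : Set Formula) (φ : Formula) : Prop :=
  ∀ M : Model, (∀ ψ ∈ S, M.eval ψ) → M.eval φ

/-- the atom q -/
def q : Formula := Formula.atom 0

/-- Lines (1)-(5) of the Fitch system S′ (equivalently the set S₀): □-distribution,
K-distribution, the strong knowability thesis ¬□(¬K φ), K and □ of tautologies,
and K, □ of any instance of these (recursively). -/
inductive FitchAx : Formula → Prop
  | boxDistr (φ ψ : Formula) :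
      FitchAx ((Formula.box (φ.imp ψ)).imp ((Formula.box φ).imp (Formula.box ψ)))
  | kDistr (φ ψ : Formula) :
      FitchAx (((Formula.K (φ.imp ψ)).and (Formula.K φ)).imp (Formula.K ψ))
  | knowability (φ : Formula) : FitchAx ((Formula.box (Formula.K φ).neg).neg)
  | ktaut (φ : Formula) : Valid φ → FitchAx (Formula.K φ)
  | boxtaut (φ : Formula) : Valid φ → FitchAx (Formula.box φ)
  | closureK (φ : Formula) : FitchAx φ → FitchAx (Formula.K φ)
  | closureBox (φ : Formula) : FitchAx φ → FitchAx (Formula.box φ)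

def wval : Formula → Prop
  | .atom _ => False
  | .imp φ ψ => wval φ → wval ψ
  | .neg φ => ¬ wval φ
  | .K _ => True
  | .box φ => wval φ

def wM : Model := ⟨fun _ => False, fun _ => True, wval⟩

lemma wM_eval (φ : Formula) : wM.eval φ ↔ wval φ := by
  induction φ with
  | atom n => rfl
  | imp φ ψ ih1 ih2 => simp [Model.eval, wval, ih1, ih2]
  | neg φ ih => simp [Model.eval, wval, ih]
  | K φ => simp [Model.eval, wval, wM]
  | box φ => simp [Model.eval, wval, wM]

/-- Preliminary Claim for Fitch's paradox: the set S₀ has a model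
in which q is false and K(φ) is true for every φ. -/
theorem fitch_preliminary_claim :
    ∃ M : Model, (∀ φ, FitchAx φ → M.eval φ) ∧ ¬ M.eval q ∧
      (∀ φ : Formula, M.eval (Formula.K φ)) := by
  refine ⟨wM, ?_, ?_, fun φ => trivial⟩
  · intro φ h
    induction h with
    | boxDistr φ ψ => intro h hφ; exact h hφ
    | kDistr φ ψ =>
        simp [Formula.and, Model.eval, wM]
    | knowability φ =>
        simp [Model.eval, wM, wval]
    | ktaut φ hv => trivial
    | boxtaut φ hv =>
        show wval φ
        exact (wM_eval φ).mp (hv wM)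
    | closureK φ h ih => trivial
    | closureBox φ h ih =>
        show wval φ
        exact (wM_eval φ).mp ih
  · exact fun h => h
end

section
/- Let S' consist of: (1) all instances of □(φ→ψ)→(□(φ)→□(ψ)); (2) all instances of (K(φ→ψ)∧K(φ))→K(ψ); (3) the strong knowability thesis ¬□(¬K(φ)) for all φ; (4) K(φ) and □(φ) for every tautology φ; (5) K(φ) and □(φ) for every instance of (1)-(5), recursively; (6) all instances of K(φ)→φ. Then S' is satisfiable and does not semantically entail q → K(q). -/
/-- S′ = lines (1)-(5) together with all instances of soundness K(φ)→φ. -/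
def FitchS' : Set Formula :=
  {φ | FitchAx φ ∨ ∃ ψ : Formula, φ = (Formula.K ψ).imp ψ}

/-- inner evaluation: K is constantly true, box is transparent -/
def e1 : Formula → Prop
  | .atom _ => True
  | .imp φ ψ => e1 φ → e1 ψ
  | .neg φ => ¬ e1 φ
  | .K _ => True
  | .box φ => e1 φ

def M1 : Model := ⟨fun _ => True, fun _ => True, e1⟩

lemma eval_M1 (φ : Formula) : M1.eval φ ↔ e1 φ := by
  induction φ with
  | atom n => simp [Model.eval, M1, e1]
  | imp φ ψ ihφ ihψ => simp [Model.eval, e1, ihφ, ihψ]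
  | neg φ ih => simp [Model.eval, e1, ih]
  | K φ ih => simp [Model.eval, M1, e1]
  | box φ ih => simp [Model.eval, M1, e1]

lemma fitch_e1 {φ : Formula} (h : FitchAx φ) : e1 φ := by
  induction h with
  | boxDistr φ ψ => simp [e1]
  | kDistr φ ψ => simp [e1, Formula.and]
  | knowability φ => simp [e1]
  | ktaut φ hv => simp [e1]
  | boxtaut φ hv => simpa [e1] using (eval_M1 φ).mp (hv M1)
  | closureK φ h ih => simp [e1]
  | closureBox φ h ih => simpa [e1] using ih

/-- derivability: MP-closure of valid formulas and Fitch axioms -/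
inductive Der : Formula → Prop
  | valid {φ : Formula} : Valid φ → Der φ
  | ax {φ : Formula} : FitchAx φ → Der φ
  | mp {φ ψ : Formula} : Der (φ.imp ψ) → Der φ → Der ψ

/-- the main model: all atoms true, K is derivability, box is e1 -/
def M3 : Model := ⟨fun _ => True, Der, e1⟩

lemma fitch_M3 {φ : Formula} (h : FitchAx φ) : M3.eval φ := by
  induction h with
  | boxDistr φ ψ =>
      simp only [Model.eval, M3]
      exact fun h1 h2 => h1 h2
  | kDistr φ ψ =>
      simp only [Model.eval, Formula.and, M3]
      intro h
      by_cases h1 : Der (φ.imp ψ)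
      · by_cases h2 : Der φ
        · exact Der.mp h1 h2
        · exact absurd (fun _ => h2) h
      · exact absurd (fun h' => absurd h' h1) h
  | knowability φ =>
      simp only [Model.eval, M3]
      intro h
      exact h trivial
  | ktaut φ hv => exact Der.valid hv
  | boxtaut φ hv =>
      simpa [Model.eval, M3] using (eval_M1 φ).mp (hv M1)
  | closureK φ h ih => exact Der.ax h
  | closureBox φ h ih =>
      simpa [Model.eval, M3] using fitch_e1 h

lemma der_M3 {φ : Formula} (h : Der φ) : M3.eval φ := by
  induction h with
  | valid hv => exact hv M3
  | ax ha => exact fitch_M3 ha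
  | mp h1 h2 ih1 ih2 => exact ih1 ih2

lemma M3_S' : ∀ φ ∈ FitchS', M3.eval φ := by
  intro φ hφ
  rcases hφ with h | ⟨ψ, rfl⟩
  · exact fitch_M3 h
  · intro h
    exact der_M3 h

/-- auxiliary model with all atoms false, used to show q is not derivable -/
def M4 : Model := ⟨fun _ => False, fun _ => True, e1⟩

lemma fitch_M4 {φ : Formula} (h : FitchAx φ) : M4.eval φ := by
  induction h with
  | boxDistr φ ψ =>
      simp only [Model.eval, M4]
      exact fun h1 h2 => h1 h2
  | kDistr φ ψ =>
      simp only [Model.eval, Formula.and, M4]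
      tauto
  | knowability φ =>
      simp only [Model.eval, M4]
      intro h
      exact h trivial
  | ktaut φ hv => trivial
  | boxtaut φ hv =>
      simpa [Model.eval, M4] using (eval_M1 φ).mp (hv M1)
  | closureK φ h ih => trivial
  | closureBox φ h ih =>
      simpa [Model.eval, M4] using fitch_e1 h

lemma der_M4 {φ : Formula} (h : Der φ) : M4.eval φ := by
  induction h with
  | valid hv => exact hv M4
  | ax ha => exact fitch_M4 ha
  | mp h1 h2 ih1 ih2 => exact ih1 ih2

lemma not_der_q : ¬ Der q := fun h => der_M4 h

/-- S′ is satisfiable and does not semantically entail q → K(q). -/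
theorem fitch_resolution :
    (∃ M : Model, ∀ φ ∈ FitchS', M.eval φ) ∧
      ¬ Entails FitchS' (q.imp (Formula.K q)) := by
  constructor
  · exact ⟨M3, M3_S'⟩
  · intro h
    have := h M3 M3_S'
    simp only [Model.eval, q, M3] at this
    exact not_der_q (this trivial)
end

section
/- Let S' consist of: (1) all instances of □(φ→ψ)→(□(φ)→□(ψ)); (2) all instances of (K(φ→ψ)∧K(φ))→K(ψ); (3) all instances of K(φ)↔□(φ); (4) K(φ) and □(φ) for every tautology; (5) K(φ) and □(φ) for every instance of (1)-(5), recursively; (6) all instances of K(φ)→φ; (7) all instances of ¬□(¬K(φ)). Then S' does not semantically entail q → K(q), i.e., there is a model satisfying (1)-(7) in which q is true but K(q) is false. -/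
/-- Lines (1)-(5) of the fitch2 system: □-distribution, K-distribution,
K(φ) ↔ □(φ), K and □ of tautologies, and K, □ of any instance of these
(recursively). -/
inductive Fitch2Ax : Formula → Prop
  | boxDistr (φ ψ : Formula) :
      Fitch2Ax ((Formula.box (φ.imp ψ)).imp ((Formula.box φ).imp (Formula.box ψ)))
  | kDistr (φ ψ : Formula) :
      Fitch2Ax (((Formula.K (φ.imp ψ)).and (Formula.K φ)).imp (Formula.K ψ))
  | keqbox (φ : Formula) : Fitch2Ax ((Formula.K φ).iff (Formula.box φ))
  | ktaut (φ : Formula) : Valid φ → Fitch2Ax (Formula.K φ)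
  | boxtaut (φ : Formula) : Valid φ → Fitch2Ax (Formula.box φ)
  | closureK (φ : Formula) : Fitch2Ax φ → Fitch2Ax (Formula.K φ)
  | closureBox (φ : Formula) : Fitch2Ax φ → Fitch2Ax (Formula.box φ)

def axTrue (φ : Formula) : Prop :=
  ∀ N : Model, (∀ ψ, Fitch2Ax ψ → N.eval ψ) → N.eval φ

def M0 : Model := ⟨fun _ => True, axTrue, axTrue⟩

def Ntriv (a : ℕ → Prop) : Model := ⟨a, fun _ => True, fun _ => True⟩

lemma Ntriv_ax (a : ℕ → Prop) : ∀ φ, Fitch2Ax φ → (Ntriv a).eval φ := by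
  intro φ h
  induction h with
  | boxDistr φ ψ => intro _ _; trivial
  | kDistr φ ψ => intro _; trivial
  | keqbox φ =>
      simp only [Formula.iff, Formula.and, Model.eval, Ntriv]
      tauto
  | ktaut φ hV => trivial
  | boxtaut φ hV => trivial
  | closureK φ h ih => trivial
  | closureBox φ h ih => trivial

lemma M0_ax : ∀ φ, Fitch2Ax φ → M0.eval φ := by
  intro φ h
  induction h with
  | boxDistr φ ψ =>
      intro h1 h2 N hN
      exact (h1 N hN) (h2 N hN)
  | kDistr φ ψ =>
      simp only [Formula.and, Model.eval, M0]
      intro h N hN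
      rcases Classical.not_imp.mp h with ⟨h1, h2⟩
      exact (h1 N hN) (Classical.not_not.mp h2 N hN)
  | keqbox φ =>
      simp only [Formula.iff, Formula.and, Model.eval, M0]
      tauto
  | ktaut φ hV => intro N _; exact hV N
  | boxtaut φ hV => intro N _; exact hV N
  | closureK φ h ih => intro N hN; exact hN _ h
  | closureBox φ h ih => intro N hN; exact hN _ h

/-- there is a model satisfying lines (1)-(5) together with all
instances of soundness K(φ)→φ (line (6)) and of the strong knowability thesis
¬□(¬K φ) (line (7)), in which q is true but K(q) is false. -/
theorem fitch2_resolution :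
    ∃ M : Model, (∀ φ, Fitch2Ax φ → M.eval φ) ∧
      (∀ φ : Formula, M.eval ((Formula.K φ).imp φ)) ∧
      (∀ φ : Formula, M.eval ((Formula.box (Formula.K φ).neg).neg)) ∧
      M.eval q ∧ ¬ M.eval (Formula.K q) := by
  refine ⟨M0, M0_ax, ?_, ?_, trivial, ?_⟩
  · intro φ h
    exact h M0 M0_ax
  · intro φ h
    exact h (Ntriv fun _ => True) (Ntriv_ax _) trivial
  · intro h
    exact h (Ntriv fun _ => False) (Ntriv_ax _)
end

section
/- Let S₀ be the union of lines (1)-(5) of the Fitch system S' (i.e., all instances of □(φ→ψ)→(□φ→□ψ), (K(φ→ψ)∧K(φ))→K(ψ), ¬□(¬K(φ)), K(φ) and □(φ) for tautologies φ, and K(φ), □(φ) for instances of these, recursively). Then for every formula φ, S₀ does not semantically entail ¬K(φ). -/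
def E : Formula → Prop
  | .atom _ => True
  | .imp φ ψ => E φ → E ψ
  | .neg φ => ¬ E φ
  | .K _ => True
  | .box φ => E φ

def Mwit : Model := ⟨fun _ => True, fun _ => True, E⟩

lemma eval_Mwit (φ : Formula) : Mwit.eval φ ↔ E φ := by
  induction φ with
  | atom n => rfl
  | imp φ ψ ihφ ihψ => simp [Model.eval, E, ihφ, ihψ]
  | neg φ ihφ => simp [Model.eval, E, ihφ]
  | K φ _ => rfl
  | box φ _ => rfl

lemma Mwit_ax (φ : Formula) (h : FitchAx φ) : Mwit.eval φ := by
  rw [eval_Mwit]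
  induction h with
  | boxDistr φ ψ => exact fun h hφ => h hφ
  | kDistr φ ψ => exact fun h => trivial
  | knowability φ => exact fun h => h trivial
  | ktaut φ _ => trivial
  | boxtaut φ hv => exact (eval_Mwit φ).mp (hv Mwit)
  | closureK φ _ _ => trivial
  | closureBox φ _ ih => exact ih

/-- the set S₀ of lines (1)-(5) of the Fitch system does not
semantically entail ¬K(φ), for any formula φ. -/
theorem fitch_S0_not_entails_notK (φ : Formula) :
    ¬ Entails {ψ | FitchAx ψ} (Formula.K φ).neg := by
  intro h
  exact h Mwit (fun ψ hψ => Mwit_ax ψ hψ) trivial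
end

section
/- For n > 1, the combined ('fused') system consisting of: all instances of K(φ→ψ)→K(φ)→K(ψ); Tₙ = p₁∨…∨pₙ; ⋀_{i=1}^n((¬Tᵢ)→K(¬Tᵢ)); (⋀_{i=1}^n ¬K(pᵢ)) ∨ K(⊥); all instances of □(φ→ψ)→(□φ→□ψ); K(φ) and □(φ) for every tautology and for every instance of the preceding schemas (recursively); together with all instances of ¬□(¬K(φ)) and K(φ)→φ, is satisfiable, and moreover has a model in which p₁ is true but K(p₁) is false. -/
/-- ⊥, a fixed contradiction. -/
def fbot : Formula := (Formula.atom 1).and (Formula.atom 1).neg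

/-- Tᵢ = p₁ ∨ … ∨ pᵢ (atom i plays the role of pᵢ, i ≥ 1). -/
def Tf : ℕ → Formula
  | 0 => Formula.atom 1
  | 1 => Formula.atom 1
  | (n+2) => (Tf (n+1)).or (Formula.atom (n+2))

/-- ⋀_{i=1}^n ¬K(pᵢ). -/
def bigNotK : ℕ → Formula
  | 0 => (Formula.K (Formula.atom 1)).neg
  | 1 => (Formula.K (Formula.atom 1)).neg
  | (n+2) => (bigNotK (n+1)).and (Formula.K (Formula.atom (n+2))).neg

/-- ⋀_{i=1}^n ((¬Tᵢ) → K(¬Tᵢ)). -/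
def bigObs : ℕ → Formula
  | 0 => ((Tf 1).neg).imp (Formula.K (Tf 1).neg)
  | 1 => ((Tf 1).neg).imp (Formula.K (Tf 1).neg)
  | (n+2) => (bigObs (n+1)).and (((Tf (n+2)).neg).imp (Formula.K (Tf (n+2)).neg))


/-- The global axioms of the fused system: K-distribution, Tₙ, observability,
the weakened surprise axiom, □-distribution, and K(φ), □(φ) for every
tautology and every instance of these schemas (recursively). -/
inductive FusedAx (n : ℕ) : Formula → Prop
  | kDistr (φ ψ : Formula) :
      FusedAx n ((Formula.K (φ.imp ψ)).imp ((Formula.K φ).imp (Formula.K ψ)))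
  | tn : FusedAx n (Tf n)
  | observ : FusedAx n (bigObs n)
  | surprise : FusedAx n ((bigNotK n).or (Formula.K fbot))
  | boxDistr (φ ψ : Formula) :
      FusedAx n ((Formula.box (φ.imp ψ)).imp ((Formula.box φ).imp (Formula.box ψ)))
  | ktaut (φ : Formula) : Valid φ → FusedAx n (Formula.K φ)
  | boxtaut (φ : Formula) : Valid φ → FusedAx n (Formula.box φ)
  | closureK (φ : Formula) : FusedAx n φ → FusedAx n (Formula.K φ)
  | closureBox (φ : Formula) : FusedAx n φ → FusedAx n (Formula.box φ)

/-- Derivable K-formulas: tautologies, fused axioms, closed under modus ponens. -/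
inductive Kset (n : ℕ) : Formula → Prop
  | valid (φ : Formula) : Valid φ → Kset n φ
  | ax (φ : Formula) : FusedAx n φ → Kset n φ
  | mp (φ ψ : Formula) : Kset n (φ.imp ψ) → Kset n φ → Kset n ψ

/-- The everything-true model. -/
def Nmodel : Model := ⟨fun _ => True, fun _ => True, fun _ => True⟩

lemma Tf_true (M : Model) : ∀ k j, 1 ≤ j → j ≤ k → M.atoms j → M.eval (Tf k)
  | 0, j, h1, h2, _ => absurd (h1.trans h2) (by omega)
  | 1, j, h1, h2, ha => by
      have hj : j = 1 := by omega
      subst hj; simpa [Tf, Model.eval] using ha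
  | (k+2), j, h1, h2, ha => by
      by_cases hj : j = k + 2
      · subst hj
        simp only [Tf, Formula.or, Model.eval]
        exact fun _ => ha
      · have ih := Tf_true M (k+1) j h1 (by omega) ha
        simp only [Tf, Formula.or, Model.eval]
        exact fun hn => absurd ih hn

lemma bigObs_true (M : Model)
    (h : ∀ i, 1 ≤ i → M.eval (((Tf i).neg).imp (Formula.K (Tf i).neg))) :
    ∀ m, M.eval (bigObs m)
  | 0 => by simpa [bigObs] using h 1 le_rfl
  | 1 => by simpa [bigObs] using h 1 le_rfl
  | (m+2) => by
      have ih := bigObs_true M h (m+1)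
      simp only [bigObs, Formula.and, Model.eval]
      exact fun f => f ih (h (m+2) (by omega))

lemma bigNotK_true (M : Model) (h : ∀ i, ¬ M.kval (Formula.atom i)) :
    ∀ m, M.eval (bigNotK m)
  | 0 => by simpa [bigNotK, Model.eval] using h 1
  | 1 => by simpa [bigNotK, Model.eval] using h 1
  | (m+2) => by
      have ih := bigNotK_true M h (m+1)
      simp only [bigNotK, Formula.and, Model.eval]
      exact fun f => f ih (h (m+2))

/-- Soundness of the fused axioms in any model where K and □ are everywhere
true and some atom among p₁,…,pₙ is true. -/
lemma fusedAx_sound_trivial (n : ℕ) (P : Model)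
    (hk : ∀ φ, P.kval φ) (hb : ∀ φ, P.boxval φ)
    (j : ℕ) (h1 : 1 ≤ j) (hj : j ≤ n) (ha : P.atoms j) :
    ∀ φ, FusedAx n φ → P.eval φ := by
  intro φ hφ
  induction hφ with
  | kDistr φ ψ => simp only [Model.eval]; exact fun _ _ => hk ψ
  | tn => exact Tf_true P n j h1 hj ha
  | observ =>
      refine bigObs_true P (fun i _ => ?_) n
      simp only [Model.eval]; exact fun _ => hk _
  | surprise =>
      simp only [Formula.or, Model.eval]
      exact fun _ => hk fbot
  | boxDistr φ ψ => simp only [Model.eval]; exact fun _ _ => hb ψ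
  | ktaut φ _ => exact hk φ
  | boxtaut φ _ => exact hb φ
  | closureK φ _ _ => exact hk φ
  | closureBox φ _ _ => exact hb φ

lemma Kset_sound_trivial (n : ℕ) (P : Model)
    (hk : ∀ φ, P.kval φ) (hb : ∀ φ, P.boxval φ)
    (j : ℕ) (h1 : 1 ≤ j) (hj : j ≤ n) (ha : P.atoms j) :
    ∀ φ, Kset n φ → P.eval φ := by
  intro φ hφ
  induction hφ with
  | valid φ h => exact h P
  | ax φ h => exact fusedAx_sound_trivial n P hk hb j h1 hj ha φ h
  | mp φ ψ _ _ ih1 ih2 => exact ih1 ih2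

lemma not_Kset_atom (n : ℕ) (hn : 1 < n) (i : ℕ) : ¬ Kset n (Formula.atom i) := by
  intro h
  set j : ℕ := if i = 1 then 2 else 1 with hjdef
  have h1 : 1 ≤ j := by simp only [hjdef]; split <;> omega
  have hj : j ≤ n := by simp only [hjdef]; split <;> omega
  have hji : j ≠ i := by simp only [hjdef]; split <;> omega
  have := Kset_sound_trivial n ⟨fun m => m ≠ i, fun _ => True, fun _ => True⟩
    (fun _ => trivial) (fun _ => trivial) j h1 hj hji (Formula.atom i) h
  exact this rfl

/-- The fused model: all atoms true, K interpreted by derivability,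
□ interpreted by truth in the everything-true model. -/
def Fmodel (n : ℕ) : Model := ⟨fun _ => True, Kset n, Nmodel.eval⟩

lemma fusedAx_sound_F (n : ℕ) (hn : 1 < n) :
    ∀ φ, FusedAx n φ → (Fmodel n).eval φ := by
  intro φ hφ
  induction hφ with
  | kDistr φ ψ =>
      simp only [Model.eval]
      exact fun h1 h2 => Kset.mp φ ψ h1 h2
  | tn => exact Tf_true (Fmodel n) n 1 le_rfl (by omega) trivial
  | observ =>
      refine bigObs_true (Fmodel n) (fun i hi => ?_) n
      simp only [Model.eval]
      exact fun hneg => absurd (Tf_true (Fmodel n) i 1 le_rfl hi trivial) hneg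
  | surprise =>
      simp only [Formula.or, Model.eval]
      intro hneg
      exact absurd (bigNotK_true (Fmodel n) (fun i => not_Kset_atom n hn i) n) hneg
  | boxDistr φ ψ =>
      show Nmodel.eval (φ.imp ψ) → Nmodel.eval φ → Nmodel.eval ψ
      exact fun h1 h2 => h1 h2
  | ktaut φ h => exact Kset.valid φ h
  | boxtaut φ h => exact h Nmodel
  | closureK φ h _ => exact Kset.ax φ h
  | closureBox φ h _ =>
      exact fusedAx_sound_trivial n Nmodel (fun _ => trivial) (fun _ => trivial)
        1 le_rfl (by omega) trivial φ h

lemma Kset_sound_F (n : ℕ) (hn : 1 < n) : ∀ φ, Kset n φ → (Fmodel n).eval φ := by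
  intro φ hφ
  induction hφ with
  | valid φ h => exact h (Fmodel n)
  | ax φ h => exact fusedAx_sound_F n hn φ h
  | mp φ ψ _ _ ih1 ih2 => exact ih1 ih2

/-- for n > 1, the fused system (the global axioms together with
all instances of the strong knowability thesis ¬□(¬K φ) and of soundness
K(φ)→φ) is satisfiable, and indeed has a model in which p₁ is true but
K(p₁) is false. -/
theorem fused_resolution (n : ℕ) (hn : 1 < n) :
    ∃ M : Model, (∀ φ, FusedAx n φ → M.eval φ) ∧
      (∀ φ : Formula, M.eval ((Formula.box (Formula.K φ).neg).neg)) ∧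
      (∀ φ : Formula, M.eval ((Formula.K φ).imp φ)) ∧
      M.eval (Formula.atom 1) ∧ ¬ M.eval (Formula.K (Formula.atom 1)) := by
  refine ⟨Fmodel n, fusedAx_sound_F n hn, ?_, ?_, trivial, not_Kset_atom n hn 1⟩
  · intro φ
    show ¬ Nmodel.eval ((Formula.K φ).neg)
    simp [Model.eval, Nmodel]
  · intro φ
    show Kset n φ → (Fmodel n).eval φ
    exact Kset_sound_F n hn φ
end
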